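/- Let S be a signed graph with n×n adjacency matrix A₀ whose eigenvalues, listed with multiplicity, are θ₁,…,θ_n, let p, q ≥ 1, and let B = [[0_p, −J_{p×q}],[−J_{q×p}, 0_q]] be the adjacency matrix of (K_{p,q},−). Let A be the adjacency matrix of S ⋆ₛ (K_{p,q},−). Then for every real t such that tI_{p+q} − B is invertible, det(tI_{n(p+q+1)} − A) = t^{n(p+q−2)} · ∏_{i=1}^{n} ((t² − pq)(t − θᵢ) − ((p+q)t − 2pq)θᵢ²). -/

import Mathlib

/-!
In block form `tI − A = [[tI − A₀, −C], [−Cᵀ, (tI − B) ⊗ I]]`, and since `C` copies `A₀` into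
every block column, the Schur complement of the invertible block `(tI − B) ⊗ I` is
`tI − A₀ − Γ_B(t) A₀²`, where `Γ_B(t) = jᵀ(tI − B)⁻¹j` sums the entries of `(tI − B)⁻¹`.
Diagonalising `A₀` gives `det(tI − A) = det(tI − B)ⁿ ∏ᵢ (t − θᵢ − Γ_B(t) θᵢ²)`.
For `B = (K_{p,q},−)`, a rank-two matrix `UV` with `VU = [[0, −q], [−p, 0]]`, one gets
`det(tI − B) = t^{p+q−2}(t² − pq)`, and solving `(tI − B)w = j` with `w` constant on each side
gives `Γ_B(t) = ((p+q)t − 2pq)/(t² − pq)`.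
-/

open Matrix BigOperators Kronecker

/-- A signed graph on vertex set `V` is represented by its adjacency matrix: a real symmetric
matrix with zero diagonal and all entries in `{-1, 0, 1}`. -/
def IsSignedAdj {V : Type*} (A : Matrix V V ℝ) : Prop :=
  A.IsHermitian ∧ (∀ i, A i i = 0) ∧ ∀ i j, A i j = -1 ∨ A i j = 0 ∨ A i j = 1

/-- The adjacency matrix of the s-neighbourhood corona `S₁ ⋆ₛ S₂`:
the block matrix `[[A₁, jᵀ ⊗ A₁], [(jᵀ ⊗ A₁)ᵀ, A₂ ⊗ I]]`, indexed by `Fin n₁ ⊕ (V × Fin n₁)`. -/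
def coronaAdj {n₁ : ℕ} {V : Type*} [DecidableEq V]
    (A₁ : Matrix (Fin n₁) (Fin n₁) ℝ) (A₂ : Matrix V V ℝ) :
    Matrix (Fin n₁ ⊕ V × Fin n₁) (Fin n₁ ⊕ V × Fin n₁) ℝ :=
  Matrix.fromBlocks A₁ (Matrix.of fun i p => A₁ i p.2) (Matrix.of fun p j => A₁ p.2 j)
    (A₂ ⊗ₖ (1 : Matrix (Fin n₁) (Fin n₁) ℝ))

/-- The adjacency matrix of `(K_{p,q}, −)`, the all-negative complete bipartite signed graph:
the block matrix `[[0, −J], [−J, 0]]`. -/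
def negKpq (p q : ℕ) : Matrix (Fin p ⊕ Fin q) (Fin p ⊕ Fin q) ℝ :=
  Matrix.fromBlocks 0 (Matrix.of fun _ _ => -1) (Matrix.of fun _ _ => -1) 0

open Polynomial

theorem Matrix.det_smul_one_sub_eq_eval_charpoly {ι R : Type*} [Fintype ι] [DecidableEq ι]
    [CommRing R] (M : Matrix ι ι R) (t : R) : (t • 1 - M).det = M.charpoly.eval t := by
  rw [eval_charpoly, smul_one_eq_diagonal, scalar_apply]

theorem Matrix.IsHermitian.det_smul_one_sub_aeval {ι : Type*} [Fintype ι] [DecidableEq ι]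
    {A : Matrix ι ι ℝ} (hA : A.IsHermitian) (f : ℝ[X]) (t : ℝ) :
    (t • (1 : Matrix ι ι ℝ) - aeval A f).det = ∏ i, (t - f.eval (hA.eigenvalues i)) := by
  rw [det_smul_one_sub_eq_eval_charpoly, ← cfc_polynomial (p := IsSelfAdjoint) f A hA,
    hA.charpoly_cfc_eq, eval_prod]
  simp

theorem Matrix.sum_sum_inv_eq_sum_of_mulVec_eq_one {ι R : Type*} [Fintype ι] [DecidableEq ι]
    [CommRing R] {M : Matrix ι ι R} (hM : IsUnit M.det) {w : ι → R} (hw : M *ᵥ w = 1) :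
    ∑ i, ∑ j, M⁻¹ i j = ∑ i, w i := by
  have hsolve : M⁻¹ *ᵥ 1 = w := by
    rw [← hw, mulVec_mulVec, nonsing_inv_mul M hM, one_mulVec]
  simp [← hsolve, mulVec, dotProduct]

theorem Matrix.of_snd_mul_kronecker_one_mul_of_snd {ι V R : Type*} [Fintype ι] [Fintype V]
    [DecidableEq ι] [CommSemiring R] (A : Matrix ι ι R) (N : Matrix V V R) :
    (of fun i (x : V × ι) => A i x.2) * (N ⊗ₖ (1 : Matrix ι ι R)) *
      of (fun (x : V × ι) j => A x.2 j)
      = (∑ v, ∑ w, N v w) • (A * A) := by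
  ext i j
  simp only [Matrix.mul_apply, Matrix.smul_apply, of_apply, kronecker_apply, one_apply, mul_ite,
    mul_one, mul_zero, Fintype.sum_prod_type, ite_mul, zero_mul, Finset.sum_ite_eq',
    Finset.mem_univ, if_true, Finset.sum_mul, Finset.mul_sum, smul_eq_mul]
  rw [Finset.sum_comm]
  refine Finset.sum_congr rfl fun k _ => ?_
  rw [Finset.sum_comm]
  exact Finset.sum_congr rfl fun v _ => Finset.sum_congr rfl fun w _ => by ring

/-- The coronal `Γ_A(t) = jᵀ (tI − A)⁻¹ j`; it is `0` when `tI − A` is singular. -/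
noncomputable def coronal {V : Type*} [Fintype V] [DecidableEq V] (A : Matrix V V ℝ) (t : ℝ) :
    ℝ :=
  ∑ i, ∑ j, (t • 1 - A)⁻¹ i j

theorem smul_one_sub_coronaAdj {n₁ : ℕ} {V : Type*} [DecidableEq V]
    (A₁ : Matrix (Fin n₁) (Fin n₁) ℝ) (A₂ : Matrix V V ℝ) (t : ℝ) :
    t • 1 - coronaAdj A₁ A₂ =
      fromBlocks (t • 1 - A₁) (-of fun i (x : V × Fin n₁) => A₁ i x.2)
        (-of fun (x : V × Fin n₁) j => A₁ x.2 j)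
        ((t • 1 - A₂) ⊗ₖ (1 : Matrix (Fin n₁) (Fin n₁) ℝ)) := by
  rw [coronaAdj, ← fromBlocks_one, fromBlocks_smul, sub_eq_add_neg, fromBlocks_neg,
    fromBlocks_add]
  congr 1
  · simp
  · simp
  · ext ⟨a, i⟩ ⟨b, j⟩
    by_cases a = b <;> by_cases i = j <;> simp [*, one_apply, sub_eq_add_neg]

theorem det_smul_one_sub_coronaAdj {n₁ : ℕ} {V : Type*} [Fintype V] [DecidableEq V]
    (A₁ : Matrix (Fin n₁) (Fin n₁) ℝ) (A₂ : Matrix V V ℝ) (t : ℝ)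
    (h : IsUnit (t • 1 - A₂).det) :
    (t • 1 - coronaAdj A₁ A₂).det
      = (t • 1 - A₂).det ^ n₁ * (t • 1 - A₁ - coronal A₂ t • (A₁ * A₁)).det := by
  have hdet : ((t • 1 - A₂) ⊗ₖ (1 : Matrix (Fin n₁) (Fin n₁) ℝ)).det
      = (t • 1 - A₂).det ^ n₁ := by
    simp [det_kronecker]
  let := invertibleOfIsUnitDet _ (hdet ▸ h.pow n₁)
  rw [smul_one_sub_coronaAdj, det_fromBlocks₂₂, invOf_eq_nonsing_inv, inv_kronecker, inv_one,
    Matrix.neg_mul, Matrix.mul_neg, Matrix.neg_mul, neg_neg, of_snd_mul_kronecker_one_mul_of_snd,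
    hdet, coronal, sub_sub]

theorem Matrix.IsHermitian.det_smul_one_sub_coronaAdj_eq_prod {n₁ : ℕ} {V : Type*} [Fintype V]
    [DecidableEq V] {A₁ : Matrix (Fin n₁) (Fin n₁) ℝ} (hA₁ : A₁.IsHermitian)
    (A₂ : Matrix V V ℝ) (t : ℝ) (h : IsUnit (t • 1 - A₂).det) :
    (t • 1 - coronaAdj A₁ A₂).det = (t • 1 - A₂).det ^ n₁ *
      ∏ i, (t - hA₁.eigenvalues i - coronal A₂ t * hA₁.eigenvalues i ^ 2) := by
  have hpoly : t • 1 - A₁ - coronal A₂ t • (A₁ * A₁)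
      = t • 1 - aeval A₁ (X + C (coronal A₂ t) * X ^ 2) := by
    simp [sub_sub, sq, Algebra.smul_def]
  rw [det_smul_one_sub_coronaAdj A₁ A₂ t h, hpoly, hA₁.det_smul_one_sub_aeval]
  simp [sub_sub]

theorem charpoly_negKpq {p q : ℕ} (hp : 1 ≤ p) (hq : 1 ≤ q) :
    (negKpq p q).charpoly = X ^ (p + q - 2) * (X ^ 2 - C ((p : ℝ) * q)) := by
  let u : Fin p ⊕ Fin q → ℝ := Sum.elim 1 0
  let v : Fin p ⊕ Fin q → ℝ := Sum.elim 0 1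
  have hB : negKpq p q = (of ![u, v])ᵀ * of ![-v, -u] := by
    ext (i | i) (j | j) <;> simp [negKpq, u, v, mul_apply]
  have hB' : of ![-v, -u] * (of ![u, v])ᵀ = !![0, -(q : ℝ); -p, 0] := by
    ext i j
    fin_cases i <;> fin_cases j <;> simp [u, v, mul_apply, Fintype.sum_sum_type]
  have hcard : Fintype.card (Fin 2) ≤ Fintype.card (Fin p ⊕ Fin q) := by
    simp only [Fintype.card_sum, Fintype.card_fin]; omega
  rw [hB, charpoly_mul_comm_of_le _ _ hcard, hB', charpoly_fin_two]
  simp [trace_fin_two, det_fin_two]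
  ring

theorem det_smul_one_sub_negKpq {p q : ℕ} (hp : 1 ≤ p) (hq : 1 ≤ q) (t : ℝ) :
    (t • 1 - negKpq p q).det = t ^ (p + q - 2) * (t ^ 2 - p * q) := by
  rw [det_smul_one_sub_eq_eval_charpoly, charpoly_negKpq hp hq]
  simp

theorem coronal_negKpq {p q : ℕ} {t : ℝ} (h : IsUnit (t • 1 - negKpq p q).det)
    (hd : t ^ 2 - p * q ≠ 0) :
    coronal (negKpq p q) t = ((p + q) * t - 2 * p * q) / (t ^ 2 - p * q) := by
  let w : Fin p ⊕ Fin q → ℝ := Sum.elim (fun _ => t - q) (fun _ => t - p)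
  have hw : (t • 1 - negKpq p q) *ᵥ w = (t ^ 2 - p * q) • 1 := by
    ext (i | i) <;>
      simp [w, negKpq, mulVec, dotProduct, Fintype.sum_sum_type, sub_mul, one_apply] <;> ring
  have hw' : (t • 1 - negKpq p q) *ᵥ ((t ^ 2 - p * q)⁻¹ • w) = 1 := by
    rw [mulVec_smul, hw, smul_smul, inv_mul_cancel₀ hd, one_smul]
  rw [coronal, sum_sum_inv_eq_sum_of_mulVec_eq_one h hw']
  simp [w, Fintype.sum_sum_type]
  field_simp
  ring

/-- Let `S` be a signed graph on `n` vertices with eigenvalues `θ₁, …, θ_n` (with multiplicity)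
and let `p, q ≥ 1`.  For every real `t` with `tI − A(K_{p,q},−)` invertible, the adjacency
matrix `A` of `S ⋆ₛ (K_{p,q},−)` satisfies
`det(tI − A) = t^{n(p+q−2)} · ∏ᵢ ((t² − pq)(t − θᵢ) − ((p+q)t − 2pq)θᵢ²)`. -/
theorem det_corona_negKpq {n p q : ℕ}
    (A₀ : Matrix (Fin n) (Fin n) ℝ) (h₀ : IsSignedAdj A₀)
    (hp : 1 ≤ p) (hq : 1 ≤ q) (t : ℝ)
    (hinv : IsUnit (t • (1 : Matrix (Fin p ⊕ Fin q) (Fin p ⊕ Fin q) ℝ) - negKpq p q).det) :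
    (t • (1 : Matrix (Fin n ⊕ (Fin p ⊕ Fin q) × Fin n)
          (Fin n ⊕ (Fin p ⊕ Fin q) × Fin n) ℝ) - coronaAdj A₀ (negKpq p q)).det
      = t ^ (n * (p + q - 2)) *
        ∏ i, ((t ^ 2 - (p : ℝ) * q) * (t - h₀.1.eigenvalues i)
            - (((p : ℝ) + q) * t - 2 * p * q) * (h₀.1.eigenvalues i) ^ 2) := by
  have hd : t ^ 2 - (p : ℝ) * q ≠ 0 := by
    rw [det_smul_one_sub_negKpq hp hq] at hinv
    exact right_ne_zero_of_mul hinv.ne_zero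
  rw [h₀.1.det_smul_one_sub_coronaAdj_eq_prod _ t hinv, det_smul_one_sub_negKpq hp hq,
    coronal_negKpq hinv hd, mul_pow, ← pow_mul, mul_comm (p + q - 2), mul_assoc,
    ← Fin.prod_const n, ← Finset.prod_mul_distrib]
  congr 1
  refine Finset.prod_congr rfl fun i _ => ?_
  field_simp
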